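/- Let a ∈ ℝ and w_n = ln(n!) − (n+1/2)·ln n + n − ln√(2π) − ψ'(n+a)/12 for n ≥ 1. Then lim_{n→∞} n^3·(w_{n+1} − w_n) = 1/12 − a/6. -/

import Mathlib

open Real Filter Topology

/-!
From `ψ'(x + 1) = ψ'(x) - 1 / x²` the trigamma terms telescope to `1 / (12 (n + a)²)`, so
`w (n + 1) - w n = 1 - (n + 1/2) log (1 + 1/n) + 1 / (12 (n + a)²)`. In the variable `x = 1/n`,
`n³` times this is `(x - (1 + x/2) log (1 + x) + x³/12) / x⁴ + ((1 + a x)⁻² - 1) / (12 x)`; the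
fourth-order Taylor expansion of `log (1 + x)` sends the first summand to `1/12`, and the second
is a difference quotient of `(1 + a x)⁻²` at `0`, which tends to `-2a / 12`.
-/

noncomputable def trigamma (x : ℝ) : ℝ :=
  iteratedDeriv 2 (fun y => Real.log (Real.Gamma y)) x

noncomputable def w (a : ℝ) (n : ℕ) : ℝ :=
  Real.log (n.factorial) - ((n : ℝ) + 1/2) * Real.log n + n
    - Real.log (Real.sqrt (2 * Real.pi)) - trigamma ((n : ℝ) + a) / 12

theorem Complex.contDiffAt_Gamma {n : WithTop ℕ∞} {s : ℂ} (hs : ∀ m : ℕ, s ≠ -m) :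
    ContDiffAt ℂ n Gamma s := by
  simpa [Pi.inv_def] using (differentiable_one_div_Gamma.contDiff (n := n)).contDiffAt.inv
    (inv_ne_zero (Gamma_ne_zero hs))

theorem Real.contDiffAt_Gamma {n : WithTop ℕ∞} {x : ℝ} (hx : ∀ m : ℕ, x ≠ -m) :
    ContDiffAt ℝ n Gamma x := by
  simpa [Complex.Gamma_ofReal] using
    (Complex.contDiffAt_Gamma (n := n) (s := x) (mod_cast hx)).real_of_complex

theorem Real.iteratedDeriv_two_log : iteratedDeriv 2 log = fun x => -(x ^ 2)⁻¹ := by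
  ext x
  simp [iteratedDeriv_succ, deriv_log']

theorem trigamma_add_one {x : ℝ} (hx : ∀ m : ℕ, x ≠ -m) :
    trigamma (x + 1) = trigamma x - 1 / x ^ 2 := by
  have hΓ : Gamma x ≠ 0 := Gamma_ne_zero hx
  have hlogΓ : ContDiffAt ℝ 2 (fun y => log (Gamma y)) x :=
    (contDiffAt_log.mpr hΓ).comp x (contDiffAt_Gamma hx)
  have hx0 : x ≠ 0 := by simpa using hx 0
  have hshift : (fun y => log (Gamma (y + 1))) =ᶠ[𝓝 x] fun y => log y + log (Gamma y) := by
    filter_upwards [(contDiffAt_Gamma (n := 0) hx).continuousAt.eventually_ne hΓ] with y hy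
    have hy0 : y ≠ 0 := by rintro rfl; exact hy Gamma_zero
    rw [Gamma_add_one hy0, log_mul hy0 hy]
  calc trigamma (x + 1) = iteratedDeriv 2 (fun y => log (Gamma (y + 1))) x :=
        (congrFun (iteratedDeriv_comp_add_const 2 _ 1) x).symm
    _ = iteratedDeriv 2 log x + trigamma x :=
        (hshift.iteratedDeriv_eq 2).trans (iteratedDeriv_fun_add (contDiffAt_log.mpr hx0) hlogΓ)
    _ = trigamma x - 1 / x ^ 2 := by rw [iteratedDeriv_two_log]; ring

theorem abs_log_one_add_sub_le {x : ℝ} (hx : |x| < 1) :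
    |log (1 + x) - (x - x ^ 2 / 2 + x ^ 3 / 3 - x ^ 4 / 4)| ≤ |x| ^ 5 / (1 - |x|) := by
  have h := abs_log_sub_add_sum_range_le (x := -x) (by rwa [abs_neg]) 4
  simp only [Finset.sum_range_succ, Finset.sum_range_zero, abs_neg, sub_neg_eq_add] at h
  convert h using 2
  push_cast
  ring

theorem tendsto_sub_one_add_half_mul_log_div_pow_four :
    Tendsto (fun x : ℝ => (x - (1 + x / 2) * log (1 + x) + x ^ 3 / 12) / x ^ 4)
      (𝓝[≠] 0) (𝓝 (1 / 12)) := by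
  -- With `P` the quartic Taylor polynomial of `log (1 + x)`, replacing `log (1 + x)` by `P x`
  -- turns the quotient into exactly `1 / 12 + x / 8`.
  set R := fun x : ℝ => (1 + x / 2) * (log (1 + x) - (x - x ^ 2 / 2 + x ^ 3 / 3 - x ^ 4 / 4)) / x ^ 4
  have hR : Tendsto R (𝓝[≠] 0) (𝓝 0) := by
    have hbound : ContinuousAt (fun x : ℝ => |1 + x / 2| * |x| / (1 - |x|)) 0 := by
      fun_prop (disch := norm_num)
    refine squeeze_zero_norm' ?_ (by simpa using hbound.tendsto.mono_left nhdsWithin_le_nhds)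
    filter_upwards [self_mem_nhdsWithin, nhdsWithin_le_nhds (Metric.ball_mem_nhds (0 : ℝ) one_pos)]
      with x (hx0 : x ≠ 0) hx1
    rw [Metric.mem_ball, dist_zero_right, Real.norm_eq_abs] at hx1
    have hpos : 0 < |x| ^ 4 := by positivity
    rw [Real.norm_eq_abs, abs_div, abs_mul, abs_pow, div_le_iff₀ hpos]
    refine (mul_le_mul_of_nonneg_left (abs_log_one_add_sub_le hx1) (abs_nonneg _)).trans_eq ?_
    field_simp
  have hlim : Tendsto (fun x : ℝ => 1 / 12 + x / 8 - R x) (𝓝[≠] 0) (𝓝 (1 / 12 + 0 / 8 - 0)) :=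
    ((tendsto_const_nhds.add ((tendsto_id.mono_left nhdsWithin_le_nhds).div_const 8)).sub hR)
  refine (by simpa using hlim : Tendsto _ _ _).congr' ?_
  filter_upwards [self_mem_nhdsWithin] with x (hx : x ≠ 0)
  simp only [R]
  field_simp
  ring

theorem tendsto_slope_inv_sq_one_add_mul (a : ℝ) :
    Tendsto (fun x : ℝ => x⁻¹ * (((1 + a * x) ^ 2)⁻¹ - 1)) (𝓝[≠] 0) (𝓝 (-2 * a)) := by
  have hderiv : HasDerivAt (fun x : ℝ => ((1 + a * x) ^ 2)⁻¹) (-2 * a) 0 := by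
    have := (((hasDerivAt_id (0 : ℝ)).const_mul a).const_add 1).fun_pow 2 |>.fun_inv (by norm_num)
    simpa using this
  simpa using hasDerivAt_iff_tendsto_slope_zero.mp hderiv

theorem tendsto_natCast_inv_nhdsNE_zero :
    Tendsto (fun n : ℕ => (n : ℝ)⁻¹) atTop (𝓝[≠] 0) :=
  (tendsto_inv_atTop_nhdsGT_zero.comp tendsto_natCast_atTop_atTop).mono_right (nhdsGT_le_nhdsNE 0)

theorem w_succ_sub_w (a : ℝ) {n : ℕ} (hn : n ≠ 0) (hna : ∀ m : ℕ, (n : ℝ) + a ≠ -m) :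
    w a (n + 1) - w a n = 1 - (n + 1 / 2) * log (1 + (n : ℝ)⁻¹) + 1 / (12 * (n + a) ^ 2) := by
  have hn' : (n : ℝ) ≠ 0 := Nat.cast_ne_zero.mpr hn
  have hlog_factorial : log ((n + 1).factorial : ℝ) = log (n + 1) + log (n.factorial : ℝ) := by
    push_cast [Nat.factorial_succ]
    exact log_mul (by positivity) (by positivity)
  have hlog_ratio : log (1 + (n : ℝ)⁻¹) = log (n + 1) - log n := by
    rw [← log_div (by positivity) hn', add_div, div_self hn', one_div]
  have htrigamma : trigamma ((n + 1 : ℕ) + a) = trigamma (n + a) - 1 / (n + a) ^ 2 := by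
    rw [Nat.cast_succ, add_right_comm, trigamma_add_one hna]
  have hna0 : (n : ℝ) + a ≠ 0 := by simpa using hna 0
  rw [w, w, hlog_factorial, htrigamma, hlog_ratio]
  field_simp
  push_cast
  ring

theorem stmt11_general (a : ℝ) :
    Filter.Tendsto (fun n : ℕ => (n : ℝ) ^ 3 * (w a (n + 1) - w a n))
      Filter.atTop (nhds (1/12 - a/6)) := by
  have hlim := ((tendsto_sub_one_add_half_mul_log_div_pow_four.add
    ((tendsto_slope_inv_sq_one_add_mul a).div_const 12)).comp tendsto_natCast_inv_nhdsNE_zero)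
  rw [show (1 : ℝ) / 12 + -2 * a / 12 = 1 / 12 - a / 6 by ring] at hlim
  refine hlim.congr' ?_
  filter_upwards [eventually_ne_atTop 0, tendsto_natCast_atTop_atTop.eventually_gt_atTop (-a)]
    with n hn hn_gt
  have hna0 : (n : ℝ) + a ≠ 0 := by linarith
  rw [Function.comp_apply, w_succ_sub_w a hn fun m => by linarith [(m.cast_nonneg : (0 : ℝ) ≤ m)]]
  field_simp
  ring

theorem stmt11 (a : ℝ) (ha : ∀ n : ℕ, 1 ≤ n → 0 < (n : ℝ) + a) :
    Filter.Tendsto (fun n : ℕ => (n : ℝ) ^ 3 * (w a (n + 1) - w a n))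
      Filter.atTop (nhds (1/12 - a/6)) :=
  stmt11_general a
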